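/- For every x=(x₂,x₃)∈ℝ² with x₃ ≠ 0, the function B satisfies (HB)(x) = 2i·B(x), where H is the operator (Hg)(x) = (−i/(4π))·(∂²g/∂x₂² − ∂²g/∂x₃²)(x) + πi·(x₂²−x₃²)·g(x). (From the proof of paper Proposition 5.12: B is an eigenfunction of weight 2 of the infinitesimal generator of SO(2) in the Weil representation, outside its singular set.) -/

import Mathlib

/-!
`B` separates as `B(x) = e^{-πx₂²} · b(x₃)`. The Gaussian satisfies
`φ'' = (4π²s² - 2π)φ`, and for `t ≠ 0` the profile satisfies `b'' = (4π²t² + 6π)b`,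
so `H` acts on the product by the scalar `i(2π + 6π)/(4π) = 2i`.
The profile equation comes from `Γ'(1/2, a) = -e^{-a}a^{-1/2}`, which makes
`T(t) = Γ(1/2, 2πt²)e^{πt²}` solve `T' = 2πtT - 2√(2π)e^{-πt²}` for `t > 0`;
since `b` is even, the case `t < 0` follows.
-/

open MeasureTheory

/-- The upper incomplete gamma function `Γ(1/2, a) = ∫_a^∞ e^{-u} u^{-1/2} du`. -/
noncomputable def Ginc (a : ℝ) : ℝ := ∫ u in Set.Ioi a, Real.exp (-u) * u ^ (-(1:ℝ)/2)

/-- The `e₃`-component `B` of the singular Schwartz function `ψ̃₀,₁`. -/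
noncomputable def B (x : ℝ × ℝ) : ℝ :=
  -(1 / (2 * Real.sqrt 2 * Real.pi)) * Real.exp (-(Real.pi * (x.1 ^ 2 + x.2 ^ 2)))
  + (1 / (2 * Real.sqrt Real.pi)) * |x.2| * Ginc (2 * Real.pi * x.2 ^ 2) *
      Real.exp (-(Real.pi * (x.1 ^ 2 - x.2 ^ 2)))

/-- The infinitesimal generator `H` of `SO(2)` in the Weil representation attached to the
signature `(1,1)` plane, acting on a real-valued function `g` on `ℝ²`:
`(Hg)(x) = (-i/(4π))·(∂²g/∂x₂² - ∂²g/∂x₃²)(x) + πi·(x₂²-x₃²)·g(x)`. -/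
noncomputable def Hop (g : ℝ × ℝ → ℝ) (x : ℝ × ℝ) : ℂ :=
  (-Complex.I / (4 * (Real.pi : ℂ))) *
    ((deriv (deriv (fun t : ℝ => g (t, x.2))) x.1
      - deriv (deriv (fun t : ℝ => g (x.1, t))) x.2 : ℝ) : ℂ)
  + (Real.pi : ℂ) * Complex.I * ((x.1 ^ 2 - x.2 ^ 2 : ℝ) : ℂ) * ((g x : ℝ) : ℂ)

open Real Set Filter Topology

lemma integrableOn_Ginc_integrand {a : ℝ} (ha : 0 ≤ a) :
    IntegrableOn (fun u : ℝ => exp (-u) * u ^ (-(1:ℝ)/2)) (Ioi a) := by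
  have h := GammaIntegral_convergent (s := 1/2) (by norm_num)
  convert h.mono_set (Ioi_subset_Ioi ha) using 3
  norm_num

lemma hasDerivAt_Ginc {a : ℝ} (ha : 0 < a) :
    HasDerivAt Ginc (-(exp (-a) * a ^ (-(1:ℝ)/2))) a := by
  set f : ℝ → ℝ := fun u => exp (-u) * u ^ (-(1:ℝ)/2)
  have hcont : ∀ y ∈ Ioi (0:ℝ), ContinuousAt f y := fun y hy =>
    (continuous_exp.comp continuous_neg).continuousAt.mul
      (continuousAt_rpow_const y _ (Or.inl (ne_of_gt hy)))
  have hint : IntervalIntegrable f volume 0 a :=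
    (intervalIntegrable_iff_integrableOn_Ioc_of_le ha.le).2
      ((integrableOn_Ginc_integrand le_rfl).mono_set Ioc_subset_Ioi_self)
  have hFTC := intervalIntegral.integral_hasDerivAt_right hint
    (ContinuousAt.stronglyMeasurableAtFilter isOpen_Ioi hcont a ha) (hcont a ha)
  refine (hFTC.const_sub (Ginc 0)).congr_of_eventuallyEq ?_
  filter_upwards [eventually_gt_nhds ha] with t ht
  rw [Ginc, Ginc, ← intervalIntegral.integral_Ioi_sub_Ioi (integrableOn_Ginc_integrand le_rfl)
    ht.le, sub_sub_cancel]

lemma hasDerivAt_Ginc_two_pi_mul_sq {t : ℝ} (ht : 0 < t) :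
    HasDerivAt (fun s => Ginc (2 * π * s ^ 2))
      (-(2 * √(2 * π) * exp (-(2 * π * t ^ 2)))) t := by
  have hinner : HasDerivAt (fun s : ℝ => 2 * π * s ^ 2) (2 * π * (2 * t)) t := by
    simpa using (hasDerivAt_pow 2 t).const_mul (2 * π)
  have hrpow : (2 * π * t ^ 2) ^ (-(1:ℝ)/2) = (√(2 * π) * t)⁻¹ := by
    rw [neg_div, rpow_neg (by positivity), ← sqrt_eq_rpow, sqrt_mul (by positivity),
      sqrt_sq ht.le]
  refine ((hasDerivAt_Ginc (by positivity)).comp t hinner).congr_deriv ?_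
  have hsq : √(2 * π) ^ 2 = 2 * π := sq_sqrt (by positivity)
  rw [hrpow]
  field_simp
  rw [hsq]

lemma hasDerivAt_exp_mul_sq (c t : ℝ) :
    HasDerivAt (fun s => exp (c * s ^ 2)) (2 * c * t * exp (c * t ^ 2)) t := by
  have h := ((hasDerivAt_pow 2 t).const_mul c).exp
  convert h using 1
  ring

lemma deriv_deriv_exp_mul_sq (c t : ℝ) :
    deriv (deriv fun s => exp (c * s ^ 2)) t = (4 * c ^ 2 * t ^ 2 + 2 * c) * exp (c * t ^ 2) := by
  have hderiv : deriv (fun s => exp (c * s ^ 2)) = fun s => 2 * c * s * exp (c * s ^ 2) :=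
    funext fun s => (hasDerivAt_exp_mul_sq c s).deriv
  rw [hderiv]
  refine (((hasDerivAt_id t).const_mul (2 * c)).mul (hasDerivAt_exp_mul_sq c t)).deriv.trans ?_
  simp only [id]
  ring

lemma Function.Even.deriv_deriv_neg {f : ℝ → ℝ} (hf : f.Even) (t : ℝ) :
    deriv (deriv f) (-t) = deriv (deriv f) t := by
  have hderiv : deriv f = fun s => -deriv f (-s) := by
    funext s
    simpa only [show (fun x => f (-x)) = f from funext hf] using deriv_comp_neg (f := f) (x := s)
  conv_rhs => rw [hderiv]
  rw [deriv.fun_neg, deriv_comp_neg, neg_neg]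

namespace B

noncomputable def tail (t : ℝ) : ℝ := Ginc (2 * π * t ^ 2) * exp (π * t ^ 2)

noncomputable def profile (t : ℝ) : ℝ :=
  -(1 / (2 * √2 * π)) * exp (-π * t ^ 2) + 1 / (2 * √π) * |t| * tail t

lemma eq_mul_profile : B = fun x => exp (-π * x.1 ^ 2) * profile x.2 := by
  funext x
  have hsum : exp (-(π * (x.1 ^ 2 + x.2 ^ 2))) = exp (-π * x.1 ^ 2) * exp (-π * x.2 ^ 2) := by
    rw [← exp_add]; ring_nf
  have hdiff : exp (-(π * (x.1 ^ 2 - x.2 ^ 2))) = exp (-π * x.1 ^ 2) * exp (π * x.2 ^ 2) := by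
    rw [← exp_add]; ring_nf
  simp only [B, profile, tail, hsum, hdiff]
  ring

lemma profile_even : profile.Even := fun t => by
  simp [profile, tail]

lemma hasDerivAt_tail_of_pos {t : ℝ} (ht : 0 < t) :
    HasDerivAt tail (2 * π * t * tail t - 2 * √(2 * π) * exp (-π * t ^ 2)) t := by
  refine ((hasDerivAt_Ginc_two_pi_mul_sq ht).mul (hasDerivAt_exp_mul_sq π t)).congr_deriv ?_
  have hexp : exp (-(2 * π * t ^ 2)) * exp (π * t ^ 2) = exp (-π * t ^ 2) := by
    rw [← exp_add]; ring_nf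
  rw [tail]
  linear_combination (-2 * √(2 * π)) * hexp

lemma hasDerivAt_profile_of_pos {t : ℝ} (ht : 0 < t) :
    HasDerivAt profile
      (1 / (2 * √π) * (1 + 2 * π * t ^ 2) * tail t - t * exp (-π * t ^ 2) / √2) t := by
  have heq : profile =ᶠ[𝓝 t]
      fun s => -(1 / (2 * √2 * π)) * exp (-π * s ^ 2) + 1 / (2 * √π) * s * tail s := by
    filter_upwards [eventually_gt_nhds ht] with s hs
    rw [profile, abs_of_pos hs]
  refine ((((hasDerivAt_exp_mul_sq (-π) t).const_mul _).add
    (((hasDerivAt_id t).const_mul _).mul (hasDerivAt_tail_of_pos ht))).congr_of_eventuallyEq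
      heq).congr_deriv ?_
  simp only [id]
  rw [sqrt_mul zero_le_two]
  have h2 : √2 ^ 2 = 2 := sq_sqrt zero_le_two
  field_simp
  linear_combination (-2 * t * exp (-(π * t ^ 2)) * √π) * h2

lemma deriv_deriv_profile_of_pos {t : ℝ} (ht : 0 < t) :
    deriv (deriv profile) t = (4 * π ^ 2 * t ^ 2 + 6 * π) * profile t := by
  have heq : deriv profile =ᶠ[𝓝 t]
      fun s => 1 / (2 * √π) * (1 + 2 * π * s ^ 2) * tail s - s * exp (-π * s ^ 2) / √2 := by
    filter_upwards [eventually_gt_nhds ht] with s hs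
    exact (hasDerivAt_profile_of_pos hs).deriv
  have hquad : HasDerivAt (fun s : ℝ => 1 / (2 * √π) * (1 + 2 * π * s ^ 2))
      (1 / (2 * √π) * (2 * π * (2 * t))) t := by
    simpa using (((hasDerivAt_pow 2 t).const_mul (2 * π)).const_add 1).const_mul (1 / (2 * √π))
  rw [heq.deriv_eq]
  refine ((hquad.mul (hasDerivAt_tail_of_pos ht)).sub
    (((hasDerivAt_id t).mul (hasDerivAt_exp_mul_sq (-π) t)).div_const √2)).deriv.trans ?_
  rw [profile, abs_of_pos ht, sqrt_mul zero_le_two]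
  simp only [id]
  have h2 : √2 ^ 2 = 2 := sq_sqrt zero_le_two
  field_simp
  linear_combination (-2 * √π * exp (-(π * t ^ 2)) * (1 + 2 * π * t ^ 2)) * h2

lemma deriv_deriv_profile {t : ℝ} (ht : t ≠ 0) :
    deriv (deriv profile) t = (4 * π ^ 2 * t ^ 2 + 6 * π) * profile t := by
  rcases ht.lt_or_gt with hneg | hpos
  · rw [← profile_even.deriv_deriv_neg, deriv_deriv_profile_of_pos (neg_pos.2 hneg),
      profile_even, neg_sq]
  · exact deriv_deriv_profile_of_pos hpos

end B

lemma Hop_mul_apply {f g : ℝ → ℝ} {x : ℝ × ℝ} {α β : ℝ}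
    (hf : deriv (deriv f) x.1 = (4 * π ^ 2 * x.1 ^ 2 - α) * f x.1)
    (hg : deriv (deriv g) x.2 = (4 * π ^ 2 * x.2 ^ 2 + β) * g x.2) :
    Hop (fun y => f y.1 * g y.2) x
      = ((α + β) / (4 * π) : ℝ) * Complex.I * (f x.1 * g x.2 : ℝ) := by
  simp only [Hop, deriv_mul_const_field', deriv_const_mul_field', hf, hg]
  have hπ : (π : ℂ) ≠ 0 := Complex.ofReal_ne_zero.2 pi_ne_zero
  push_cast
  field_simp
  ring

/-- From the proof of paper Proposition 5.12: outside its singular set `x₃ = 0`,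
`B` is an eigenfunction of weight `2`: `(HB)(x) = 2i·B(x)`. -/
theorem stmt11 (x : ℝ × ℝ) (hx : x.2 ≠ 0) :
    Hop B x = 2 * Complex.I * ((B x : ℝ) : ℂ) := by
  have hgauss : deriv (deriv fun t => exp (-π * t ^ 2)) x.1
      = (4 * π ^ 2 * x.1 ^ 2 - 2 * π) * exp (-π * x.1 ^ 2) := by
    rw [deriv_deriv_exp_mul_sq]; ring
  have hweight : (2 * π + 6 * π) / (4 * π) = 2 := by field_simp; ring
  rw [B.eq_mul_profile, Hop_mul_apply hgauss (B.deriv_deriv_profile hx), hweight]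
  norm_num
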